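/- For every finite tree T, the domination number equals the packing number: γ(T) = ρ(T). -/

import Mathlib

open SimpleGraph Finset

variable {V : Type*}

/-- The closed neighborhood `N[v]` of a vertex `v`, as a `Finset`. -/
def closedNbrFinset (G : SimpleGraph V) [Fintype V] [DecidableEq V] [DecidableRel G.Adj]
    (v : V) : Finset V :=
  insert v (G.neighborFinset v)

/-- `B` is a packing in `G`: every closed neighborhood meets `B` in at most one vertex. -/
def IsPacking (G : SimpleGraph V) [Fintype V] [DecidableEq V] [DecidableRel G.Adj]
    (B : Finset V) : Prop :=
  ∀ v : V, (closedNbrFinset G v ∩ B).card ≤ 1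

/-- The packing number `ρ(G)`: the maximum cardinality of a packing in `G`. -/
noncomputable def packingNumber (G : SimpleGraph V) [Fintype V] [DecidableEq V]
    [DecidableRel G.Adj] : ℕ :=
  sSup {m | ∃ B : Finset V, IsPacking G B ∧ B.card = m}

/-- `S` is a dominating set in `G`. -/
def IsDominatingSet (G : SimpleGraph V) (S : Finset V) : Prop :=
  ∀ v ∉ S, ∃ u ∈ S, G.Adj u v

/-- The domination number `γ(G)`: the minimum cardinality of a dominating set. -/
noncomputable def dominationNumber (G : SimpleGraph V) [Fintype V] : ℕ :=
  sInf {m | ∃ S : Finset V, IsDominatingSet G S ∧ S.card = m}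

/-!
Greedy argument: root the tree at `r` and let `d` be the distance from `r`. Repeatedly take an
undominated vertex `u` of maximal depth, put it into the packing and its parent `p` (or `u`
itself if it has none) into the dominating set. Every undominated vertex within distance two of
`u` would lie in `N[p]` or be deeper than `u`, so the chosen vertices form a packing, and it is
as large as the dominating set. Conversely, any packing is at most as large as any dominating
set, since each closed neighborhood contains at most one vertex of the packing.
-/

theorem dominationNumber_le {G : SimpleGraph V} [Fintype V] {S : Finset V}
    (hS : IsDominatingSet G S) : dominationNumber G ≤ #S :=
  Nat.sInf_le ⟨S, hS, rfl⟩

section Packing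

variable {G : SimpleGraph V} [Fintype V] [DecidableEq V] [DecidableRel G.Adj]

theorem mem_closedNbrFinset {v w : V} : w ∈ closedNbrFinset G v ↔ w = v ∨ G.Adj v w := by
  simp [closedNbrFinset]

theorem isPacking_iff {B : Finset V} :
    IsPacking G B ↔ ∀ v, ∀ a ∈ B, ∀ b ∈ B,
      a ∈ closedNbrFinset G v → b ∈ closedNbrFinset G v → a = b := by
  simp only [IsPacking, Finset.card_le_one, Finset.mem_inter]
  grind

theorem IsPacking.insert {B : Finset V} {u : V} (hB : IsPacking G B)
    (hu : ∀ b ∈ B, ∀ v, u ∈ closedNbrFinset G v → b ∉ closedNbrFinset G v) :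
    IsPacking G (insert u B) := by
  rw [isPacking_iff] at hB ⊢
  intro v a ha b hb hav hbv
  rw [Finset.mem_insert] at ha hb
  rcases ha with rfl | ha <;> rcases hb with rfl | hb
  · rfl
  · exact absurd hbv (hu b hb v hav)
  · exact absurd hav (hu a ha v hbv)
  · exact hB v a ha b hb hav hbv

theorem IsPacking.card_le_card_of_isDominatingSet {B S : Finset V} (hB : IsPacking G B)
    (hS : IsDominatingSet G S) : #B ≤ #S := by
  refine Finset.card_le_card_of_forall_subsingleton (fun b s => b ∈ closedNbrFinset G s) ?_ ?_
  · intro b _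
    by_cases hbS : b ∈ S
    · exact ⟨b, hbS, mem_closedNbrFinset.2 (Or.inl rfl)⟩
    · obtain ⟨s, hs, hsb⟩ := hS b hbS
      exact ⟨s, hs, mem_closedNbrFinset.2 (Or.inr hsb)⟩
  · intro s _ a ha b hb
    exact isPacking_iff.1 hB s a ha.1 b hb.1 ha.2 hb.2

theorem bddAbove_packingCards : BddAbove {m | ∃ B : Finset V, IsPacking G B ∧ #B = m} :=
  ⟨Fintype.card V, by rintro _ ⟨B, -, rfl⟩; exact B.card_le_univ⟩

theorem le_packingNumber {B : Finset V} (hB : IsPacking G B) : #B ≤ packingNumber G :=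
  le_csSup bddAbove_packingCards ⟨B, hB, rfl⟩

theorem packingNumber_le_dominationNumber : packingNumber G ≤ dominationNumber G := by
  obtain ⟨S, hS, hSc⟩ :=
    Nat.sInf_mem (s := {m | ∃ S : Finset V, IsDominatingSet G S ∧ #S = m})
      ⟨_, Finset.univ, fun v hv => absurd (Finset.mem_univ v) hv, rfl⟩
  obtain ⟨B, hB, hBc⟩ :=
    Nat.sSup_mem (s := {m | ∃ B : Finset V, IsPacking G B ∧ #B = m})
      ⟨0, ∅, fun v => by simp, rfl⟩ bddAbove_packingCards
  rw [packingNumber, dominationNumber, ← hBc, ← hSc]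
  exact hB.card_le_card_of_isDominatingSet hS

end Packing

namespace SimpleGraph.IsTree

variable {T : SimpleGraph V}

theorem eq_of_adj_of_dist_lt (hT : T.IsTree) (r : V) {x y z : V} (hy : T.Adj x y)
    (hz : T.Adj x z) (hyx : T.dist r y < T.dist r x) (hzx : T.dist r z < T.dist r x) :
    y = z := by
  classical
  obtain ⟨q, hq, -⟩ := hT.connected.exists_path_of_dist r x
  have eq_penultimate : ∀ w, T.Adj x w → T.dist r w < T.dist r x → w = q.penultimate := by
    intro w hw hwx
    obtain ⟨q', hq', hq'len⟩ := hT.connected.exists_path_of_dist r w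
    have hxq' : x ∉ q'.support := fun hx => by
      have := (SimpleGraph.dist_le (q'.takeUntil x hx)).trans (q'.length_takeUntil_le_length hx)
      omega
    exact hT.isAcyclic.eq_penultimate_of_adj_end hq hw
      (hT.isAcyclic.mem_support_of_ne_mem_support_of_adj_of_isPath hq hq' hw hxq')
  rw [eq_penultimate y hy hyx, eq_penultimate z hz hzx]

variable [Fintype V] [DecidableEq V] [DecidableRel T.Adj]

theorem notMem_closedNbrFinset_of_dist_le (hT : T.IsTree) (r : V) {u p b v : V}
    (hup : u ∈ closedNbrFinset T p)
    (hparent : ∀ x, T.Adj u x → T.dist r x < T.dist r u → x = p)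
    (hbp : b ∉ closedNbrFinset T p) (hbu : T.dist r b ≤ T.dist r u)
    (huv : u ∈ closedNbrFinset T v) : b ∉ closedNbrFinset T v := by
  intro hbv
  rw [mem_closedNbrFinset] at hup hbp huv hbv
  have hdist {a c : V} (h : T.Adj a c) := hT.dist_eq_dist_add_one_of_adj r h
  rcases huv with rfl | hvu
  · rcases hbv with rfl | hub
    · exact hbp hup
    · by_cases hbu' : T.dist r b < T.dist r u
      · exact hbp (Or.inl (hparent b hub hbu'))
      · rcases hdist hub with h | h <;> omega
  · by_cases hvu' : T.dist r v < T.dist r u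
    · obtain rfl := hparent v hvu.symm hvu'
      exact hbp hbv
    have hv : T.dist r v = T.dist r u + 1 := by rcases hdist hvu with h | h <;> omega
    rcases hbv with rfl | hvb
    · omega
    · have hbv' : T.dist r b < T.dist r v := by rcases hdist hvb with h | h <;> omega
      obtain rfl := hT.eq_of_adj_of_dist_lt r hvu hvb (by omega) hbv'
      exact hbp hup

theorem exists_packing_subset_dominating (hT : T.IsTree) (r : V) (U : Finset V) :
    ∃ B S : Finset V, B ⊆ U ∧ IsPacking T B ∧
      (∀ u ∈ U, ∃ s ∈ S, u ∈ closedNbrFinset T s) ∧ #S ≤ #B := by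
  induction U using Finset.strongInduction with
  | H U ih =>
  rcases U.eq_empty_or_nonempty with rfl | hne
  · exact ⟨∅, ∅, subset_rfl, fun v => by simp, by simp, le_rfl⟩
  obtain ⟨u, huU, hmax⟩ := U.exists_max_image (T.dist r) hne
  obtain ⟨p, hup, hparent⟩ : ∃ p, u ∈ closedNbrFinset T p ∧
      ∀ x, T.Adj u x → T.dist r x < T.dist r u → x = p := by
    by_cases h : ∃ x, T.Adj u x ∧ T.dist r x < T.dist r u
    · obtain ⟨p, hp, hpu⟩ := h
      exact ⟨p, mem_closedNbrFinset.2 (Or.inr hp.symm),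
        fun x hx hxu => hT.eq_of_adj_of_dist_lt r hx hp hxu hpu⟩
    · simp only [not_exists, not_and, not_lt] at h
      exact ⟨u, mem_closedNbrFinset.2 (Or.inl rfl), fun x hx hxu => absurd hxu (h x hx).not_gt⟩
  obtain ⟨B, S, hBU, hB, hS, hSB⟩ := ih (U \ closedNbrFinset T p)
    ((Finset.ssubset_iff_of_subset Finset.sdiff_subset).2
      ⟨u, huU, fun h => (Finset.mem_sdiff.1 h).2 hup⟩)
  have huB : u ∉ B := fun h => (Finset.mem_sdiff.1 (hBU h)).2 hup
  refine ⟨insert u B, insert p S, Finset.insert_subset huU (hBU.trans Finset.sdiff_subset),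
    hB.insert fun b hb v huv => ?_, fun w hw => ?_, ?_⟩
  · obtain ⟨hbU, hbp⟩ := Finset.mem_sdiff.1 (hBU hb)
    exact hT.notMem_closedNbrFinset_of_dist_le r hup hparent hbp (hmax b hbU) huv
  · by_cases hwp : w ∈ closedNbrFinset T p
    · exact ⟨p, Finset.mem_insert_self p S, hwp⟩
    · obtain ⟨s, hs, hws⟩ := hS w (Finset.mem_sdiff.2 ⟨hw, hwp⟩)
      exact ⟨s, Finset.mem_insert_of_mem hs, hws⟩
  · rw [Finset.card_insert_of_notMem huB]
    exact (Finset.card_insert_le p S).trans (Nat.add_le_add_right hSB 1)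

end SimpleGraph.IsTree

/-- Meir–Moon: for every tree `T`, `γ(T) = ρ(T)`. -/
theorem dominationNumber_eq_packingNumber (T : SimpleGraph V) [Fintype V] [DecidableEq V]
    [DecidableRel T.Adj] (hT : T.IsTree) :
    dominationNumber T = packingNumber T := by
  obtain ⟨r⟩ := hT.connected.nonempty
  obtain ⟨B, S, -, hB, hS, hSB⟩ := hT.exists_packing_subset_dominating r Finset.univ
  have hdom : IsDominatingSet T S := fun v hv => by
    obtain ⟨s, hs, hvs⟩ := hS v (Finset.mem_univ v)
    rcases mem_closedNbrFinset.1 hvs with rfl | hsv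
    · exact absurd hs hv
    · exact ⟨s, hs, hsv⟩
  refine le_antisymm ?_ packingNumber_le_dominationNumber
  calc dominationNumber T ≤ #S := dominationNumber_le hdom
    _ ≤ #B := hSB
    _ ≤ packingNumber T := le_packingNumber hB
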